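/- arXiv:1410.7659 — 2 statements merged into one kernel-verified Lean document; each statement's English description precedes it below -/
import Mathlib

section
/- Let θ, h be real with |θ| ≤ β and |h| ≤ β(d-1) for β > 0 and integer d ≥ 1. Define p⁺ = exp(2θ+2h)/(1+exp(2θ+2h)) and p⁻ = exp(-2θ+2h)/(1+exp(-2θ+2h)). Then sign(θ)·(p⁺ - p⁻) ≤ exp(4|θ|) - 1 ≤ 8·exp(8βd)·sign(θ)·(p⁺ - p⁻). -/
lemma stmt_5_aux (β c θ h : ℝ) (hβ : 0 < β) (hc : 1 ≤ c)
    (hθ0 : 0 ≤ θ) (hθ : θ ≤ β) (hh : |h| ≤ β * (c - 1)) :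
    (Real.exp (2*θ + 2*h) / (1 + Real.exp (2*θ + 2*h)) -
      Real.exp (-2*θ + 2*h) / (1 + Real.exp (-2*θ + 2*h))) ≤ Real.exp (4 * θ) - 1 ∧
    Real.exp (4 * θ) - 1 ≤ 8 * Real.exp (8*β*c) *
      (Real.exp (2*θ + 2*h) / (1 + Real.exp (2*θ + 2*h)) -
        Real.exp (-2*θ + 2*h) / (1 + Real.exp (-2*θ + 2*h))) := by
  obtain ⟨hh1, hh2⟩ := abs_le.mp hh
  set x := Real.exp (2*θ) with hxdef
  set y := Real.exp (2*h) with hydef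
  have hx : 1 ≤ x := by
    rw [hxdef]; nlinarith [Real.one_le_exp (by linarith : (0:ℝ) ≤ 2*θ)]
  have hy : 0 < y := Real.exp_pos _
  have hx0 : 0 < x := lt_of_lt_of_le one_pos hx
  have hA : Real.exp (2*θ + 2*h) = x * y := by rw [hxdef, hydef, ← Real.exp_add]
  have hB : Real.exp (-2*θ + 2*h) = y / x := by
    rw [hxdef, hydef, eq_div_iff (ne_of_gt (Real.exp_pos _)), ← Real.exp_add]
    ring_nf
  have h4 : Real.exp (4 * θ) = x ^ 2 := by
    rw [hxdef, ← Real.exp_nat_mul]; norm_num; ring_nf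
  have hE : (1:ℝ) ≤ Real.exp (2*β*c) := Real.one_le_exp (by nlinarith)
  have hxy : x * y ≤ Real.exp (2*β*c) := by
    rw [hxdef, hydef, ← Real.exp_add]
    exact Real.exp_le_exp.mpr (by nlinarith)
  have hxdy : x ≤ y * Real.exp (2*β*c) := by
    rw [hxdef, hydef, ← Real.exp_add]
    exact Real.exp_le_exp.mpr (by nlinarith)
  have hE2 : Real.exp (2*β*c) * Real.exp (2*β*c) ≤ Real.exp (8*β*c) := by
    rw [← Real.exp_add]
    exact Real.exp_le_exp.mpr (by nlinarith)
  have hden1 : (0:ℝ) < 1 + x * y := by positivity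
  have hden2 : (0:ℝ) < x + y := by positivity
  have hdiff : Real.exp (2*θ + 2*h) / (1 + Real.exp (2*θ + 2*h)) -
      Real.exp (-2*θ + 2*h) / (1 + Real.exp (-2*θ + 2*h)) =
      y * (x^2 - 1) / ((1 + x*y) * (x + y)) := by
    rw [hA, hB]
    have hx' : x ≠ 0 := ne_of_gt hx0
    field_simp
    ring
  rw [hdiff, h4]
  set E := Real.exp (2*β*c) with hEdef
  set F := Real.exp (8*β*c) with hFdef
  clear_value x y E F
  clear hEdef hFdef hxdef hydef hA hB h4
  constructor
  · rw [div_le_iff₀ (by positivity)]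
    nlinarith [mul_nonneg (by nlinarith : (0:ℝ) ≤ x^2 - 1)
      (by positivity : (0:ℝ) ≤ x + x^2*y + x*y^2)]
  · rw [show 8 * F * (y * (x^2 - 1) / ((1 + x*y) * (x + y))) =
        (8 * F * (y * (x^2 - 1))) / ((1 + x*y) * (x + y)) from by ring,
      le_div_iff₀ (by positivity)]
    have hF : (0:ℝ) < F := by nlinarith
    have hkey : (1 + x*y) * (x + y) ≤ 8 * F * y := by
      have h1 : 1 + x*y ≤ 2 * E := by linarith
      have h2 : x + y ≤ 2 * y * E := by nlinarith
      calc (1 + x*y) * (x + y) ≤ (2 * E) * (2 * y * E) := by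
            apply mul_le_mul h1 h2 (by positivity) (by positivity)
        _ ≤ 8 * F * y := by nlinarith
    nlinarith [mul_le_mul_of_nonneg_left hkey (by nlinarith : (0:ℝ) ≤ x^2 - 1)]
  
theorem stmt_5 (β : ℝ) (hβ : 0 < β) (d : ℕ) (hd : 1 ≤ d)
    (θ h : ℝ) (hθ : |θ| ≤ β) (hh : |h| ≤ β * (d - 1))
    (pp pm : ℝ)
    (hpp : pp = Real.exp (2*θ + 2*h) / (1 + Real.exp (2*θ + 2*h)))
    (hpm : pm = Real.exp (-2*θ + 2*h) / (1 + Real.exp (-2*θ + 2*h))) :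
    Real.sign θ * (pp - pm) ≤ Real.exp (4 * |θ|) - 1 ∧
    Real.exp (4 * |θ|) - 1 ≤ 8 * Real.exp (8*β*d) * (Real.sign θ * (pp - pm)) := by
  have hc : (1:ℝ) ≤ (d:ℝ) := by exact_mod_cast hd
  rcases lt_trichotomy θ 0 with hlt | heq | hgt
  · have hs : Real.sign θ = -1 := Real.sign_of_neg hlt
    have habs : |θ| = -θ := abs_of_neg hlt
    have := stmt_5_aux β d (-θ) h hβ hc (by linarith) (by rw [← habs]; exact hθ) hh
    rw [show 2*(-θ) + 2*h = -2*θ + 2*h by ring, show -2*(-θ) + 2*h = 2*θ + 2*h by ring] at this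
    rw [hs, habs, hpp, hpm]
    constructor
    · have := this.1; linarith
    · have := this.2; linarith
  · subst heq
    simp only [Real.sign_zero, abs_zero, mul_zero, zero_mul]
    norm_num
  · have hs : Real.sign θ = 1 := Real.sign_of_pos hgt
    have habs : |θ| = θ := abs_of_pos hgt
    have := stmt_5_aux β d θ h hβ hc (le_of_lt hgt) (by rw [← habs]; exact hθ) hh
    rw [hs, habs, hpp, hpm]
    constructor
    · have := this.1; linarith
    · have := this.2; linarith
end

section
/- Consider the Ising distribution on σ ∈ {-1,+1}^{d+1} with P(σ) ∝ exp(Σ_{i<j} θ_{ij} σ_i σ_j), where all couplings satisfy θ_{ij} ≥ 0 and θ_{ij} ≤ β, and the all-plus configuration has energy at least β(d²-1)/2. Then P(|Σ_i σ_i| ≤ d/3 + 1) ≤ d·(3e)^{d/3+1}·exp(-β·d·(d-3)/3). -/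
/-!
For spins `s ∈ {±1}ⁿ` with magnetization `m = ∑ sᵢ` one has `∑_{i<j} sᵢ sⱼ = (m² - n) / 2`.
Writing the energy as `∑_{i<j} θᵢⱼ (sᵢ sⱼ + 1) - S` with `S = ∑_{i<j} θᵢⱼ` and using `θᵢⱼ ≤ β`,
every configuration with `|m| ≤ d/3 + 1` has weight at most `exp (β((d/3+1)² + d² - 1)/2 - S)`,
while the all-plus configuration alone has weight `exp S ≥ exp (β(d² - 1)/2)`. There are at most
`2^(d+1) ≤ (3e)^(d/3+1)` configurations, and for `d ≥ 2` the exponent gap is at most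
`-βd(d-3)/3`; for `d = 1` the right-hand side already exceeds `1`.
-/

open Finset Real

section PairSums

variable {ι : Type*} [Fintype ι] [LinearOrder ι]

theorem sq_sum_eq_sum_sq_add_two_mul_sum_pairs {R : Type*} [CommSemiring R] (f : ι → R) :
    (∑ i, f i) ^ 2 = ∑ i, f i ^ 2 + 2 * ∑ i, ∑ j ∈ univ.filter (i < ·), f i * f j := by
  have hsplit : ∀ i j, f i * f j = ((if i < j then f i * f j else 0)
      + if j < i then f j * f i else 0) + if j = i then f i ^ 2 else 0 := by
    intro i j
    rcases lt_trichotomy i j with h | rfl | h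
    · simp [h, h.not_gt, h.ne']
    · simp [sq]
    · simp [h, h.not_gt, h.ne, mul_comm]
  have hswap : ∑ i, ∑ j, (if j < i then f j * f i else 0)
      = ∑ i, ∑ j, (if i < j then f i * f j else 0) := sum_comm
  rw [sq, sum_mul_sum, sum_congr rfl fun i _ => sum_congr rfl fun j _ => hsplit i j]
  simp only [sum_add_distrib, hswap, sum_ite_eq', mem_univ, if_true, sum_filter]
  ring

theorem sum_pairs_mul_spin_le_of_abs_sum_le (θ : ι → ι → ℝ) {β : ℝ} (hθ : ∀ i j, θ i j ≤ β)
    (hβ : 0 ≤ β) (s : ι → ℝ) (hs : ∀ i, s i ^ 2 = 1) {r : ℝ} (hr : |∑ i, s i| ≤ r) :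
    ∑ i, ∑ j ∈ univ.filter (i < ·), θ i j * s i * s j
      ≤ β * (r ^ 2 + (Fintype.card ι : ℝ) ^ 2 - 2 * Fintype.card ι) / 2
        - ∑ i, ∑ j ∈ univ.filter (i < ·), θ i j := by
  have hspins := sq_sum_eq_sum_sq_add_two_mul_sum_pairs s
  have hpairs := sq_sum_eq_sum_sq_add_two_mul_sum_pairs fun _ : ι => (1 : ℝ)
  simp only [hs, one_pow, mul_one, sum_const, card_univ, nsmul_eq_mul] at hspins hpairs
  have hterm : ∀ i j, θ i j * s i * s j + θ i j ≤ β * (s i * s j + 1) := fun i j =>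
    calc θ i j * s i * s j + θ i j = θ i j * (s i * s j + 1) := by ring
      _ ≤ β * (s i * s j + 1) :=
        mul_le_mul_of_nonneg_right (hθ i j) (by nlinarith [hs i, hs j, sq_nonneg (s i + s j)])
  have hsum := sum_le_sum fun (i : ι) (_ : i ∈ univ) =>
    sum_le_sum fun j (_ : j ∈ univ.filter (i < ·)) => hterm i j
  have hrhs : ∑ i, ∑ j ∈ univ.filter (i < ·), β * (s i * s j + 1)
      = β * ∑ i, ∑ j ∈ univ.filter (i < ·), s i * s j
        + β * ∑ i : ι, ∑ j ∈ univ.filter (i < ·), (1 : ℝ) := by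
    simp only [mul_add, sum_add_distrib, mul_sum]
  simp only [sum_const, nsmul_eq_mul, mul_one] at hrhs
  simp only [sum_add_distrib] at hsum
  rw [hrhs] at hsum
  have hm : (∑ i, s i) ^ 2 ≤ r ^ 2 := sq_le_sq' (abs_le.mp hr).1 (abs_le.mp hr).2
  nlinarith

end PairSums

theorem sum_div_sum_le_card_mul_div {α : Type*} [Fintype α] {w : α → ℝ} (hw : ∀ a, 0 ≤ w a)
    {s : Finset α} {M : ℝ} (hM : ∀ a ∈ s, w a ≤ M) {a₀ : α} (ha₀ : 0 < w a₀) :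
    (∑ a ∈ s, w a) / ∑ a, w a ≤ #s * M / w a₀ :=
  calc (∑ a ∈ s, w a) / ∑ a, w a ≤ (∑ a ∈ s, w a) / w a₀ :=
        div_le_div_of_nonneg_left (sum_nonneg fun a _ => hw a) ha₀
          (single_le_sum (fun a _ => hw a) (mem_univ a₀))
    _ ≤ #s * M / w a₀ := by
        gcongr
        simpa only [nsmul_eq_mul] using sum_le_card_nsmul s w M hM

theorem two_pow_succ_le_three_mul_exp_one_rpow (d : ℕ) :
    (2 : ℝ) ^ (d + 1) ≤ (3 * exp 1) ^ ((d : ℝ) / 3 + 1) :=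
  calc (2 : ℝ) ^ (d + 1) ≤ 2 ^ (d + 3) := pow_le_pow_right₀ (by norm_num) (by omega)
    _ = (2 ^ 3 : ℝ) ^ ((d : ℝ) / 3 + 1) := by
        rw [← rpow_natCast_mul (by norm_num), ← rpow_natCast]
        push_cast
        ring_nf
    _ ≤ (3 * exp 1) ^ ((d : ℝ) / 3 + 1) := by
        gcongr
        linarith [exp_one_gt_d9]

theorem stmt_18_general (d : ℕ) (hd : 1 ≤ d) (β : ℝ) (hβ : 0 < β)
    (θ : Fin (d + 1) → Fin (d + 1) → ℝ)
    (hub : ∀ i j, θ i j ≤ β)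
    (spin : Bool → ℝ) (hspin : spin = fun b => if b then 1 else -1)
    (w : (Fin (d + 1) → Bool) → ℝ)
    (hw : w = fun σ => Real.exp (∑ i, ∑ j ∈ univ.filter (fun j => i < j),
      θ i j * spin (σ i) * spin (σ j)))
    (hplus : β * ((d : ℝ) ^ 2 - 1) / 2
      ≤ ∑ i, ∑ j ∈ univ.filter (fun j => i < j), θ i j) :
    (∑ σ ∈ univ.filter (fun σ : Fin (d + 1) → Bool =>
        |∑ i, spin (σ i)| ≤ (d : ℝ) / 3 + 1), w σ) / (∑ σ, w σ)
      ≤ d * (3 * Real.exp 1) ^ ((d : ℝ) / 3 + 1) * Real.exp (-β * d * (d - 3) / 3) := by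
  have hspin_sq : ∀ b, spin b ^ 2 = 1 := by intro b; cases b <;> simp [hspin]
  have hw_pos : ∀ σ, 0 < w σ := fun σ => hw ▸ exp_pos _
  obtain rfl | hd2 : d = 1 ∨ 2 ≤ d := by omega
  · calc _ ≤ (1 : ℝ) := div_le_one_of_le₀
          (sum_le_sum_of_subset_of_nonneg (filter_subset _ _) fun σ _ _ => (hw_pos σ).le)
          (sum_nonneg fun σ _ => (hw_pos σ).le)
      _ ≤ _ := by
          rw [Nat.cast_one, one_mul]
          refine one_le_mul_of_one_le_of_one_le (one_le_rpow ?_ (by norm_num)) (one_le_exp ?_)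
          · linarith [exp_one_gt_d9]
          · nlinarith
  set S := ∑ i, ∑ j ∈ univ.filter (fun j => i < j), θ i j
  have hsmall : ∀ σ ∈ univ.filter (fun σ : Fin (d + 1) → Bool =>
      |∑ i, spin (σ i)| ≤ (d : ℝ) / 3 + 1),
      w σ ≤ exp (β * (((d : ℝ) / 3 + 1) ^ 2 + (d : ℝ) ^ 2 - 1) / 2 - S) := by
    intro σ hσ
    have := sum_pairs_mul_spin_le_of_abs_sum_le θ hub hβ.le (fun i => spin (σ i))
      (fun i => hspin_sq (σ i)) (mem_filter.mp hσ).2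
    rw [hw, exp_le_exp]
    simp only [Fintype.card_fin, Nat.cast_add, Nat.cast_one] at this
    linarith
  have hplus_w : w (fun _ => true) = exp S := by simp [hw, hspin, S]
  calc _ ≤ _ := sum_div_sum_le_card_mul_div (fun σ => (hw_pos σ).le) hsmall (hw_pos fun _ => true)
    _ ≤ (2 : ℝ) ^ (d + 1) * exp (-β * d * (d - 3) / 3) := by
        rw [hplus_w, mul_div_assoc, ← exp_sub]
        gcongr
        · exact_mod_cast (card_le_univ _).trans_eq (by simp)
        · have hd2' : (2 : ℝ) ≤ d := by exact_mod_cast hd2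
          nlinarith
    _ ≤ (3 * exp 1) ^ ((d : ℝ) / 3 + 1) * exp (-β * d * (d - 3) / 3) := by
        gcongr
        exact two_pow_succ_le_three_mul_exp_one_rpow d
    _ ≤ _ := by
        rw [mul_assoc (d : ℝ)]
        exact le_mul_of_one_le_left (by positivity) (Nat.one_le_cast.mpr hd : (1 : ℝ) ≤ d)

theorem stmt_18 (d : ℕ) (hd : 1 ≤ d) (β : ℝ) (hβ : 0 < β)
    (θ : Fin (d + 1) → Fin (d + 1) → ℝ)
    (hnn : ∀ i j, 0 ≤ θ i j) (hub : ∀ i j, θ i j ≤ β)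
    (spin : Bool → ℝ) (hspin : spin = fun b => if b then 1 else -1)
    (w : (Fin (d + 1) → Bool) → ℝ)
    (hw : w = fun σ => Real.exp (∑ i, ∑ j ∈ univ.filter (fun j => i < j),
      θ i j * spin (σ i) * spin (σ j)))
    (hplus : β * ((d : ℝ) ^ 2 - 1) / 2
      ≤ ∑ i, ∑ j ∈ univ.filter (fun j => i < j), θ i j) :
    (∑ σ ∈ univ.filter (fun σ : Fin (d + 1) → Bool =>
        |∑ i, spin (σ i)| ≤ (d : ℝ) / 3 + 1), w σ) / (∑ σ, w σ)
      ≤ d * (3 * Real.exp 1) ^ ((d : ℝ) / 3 + 1) * Real.exp (-β * d * (d - 3) / 3) :=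
  stmt_18_general d hd β hβ θ hub spin hspin w hw hplus
end
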